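/- For the Thue–Morse substitution τ : Z/2 → (Z/2)² given by τ(a) = (a, a+1) on H = (Z/2)^(N), the substitutional subshift X_τ has exactly two elements, and the H-action on X_τ factors through the homomorphism σ : H → Z/2 given by σ(h) = Σ_n h(n). -/

import Mathlib

/-!
The Thue–Morse substitution `τ(a) = (a, a+1)` on `H = (ℤ/2)^(ℕ) = ℕ →₀ ZMod 2`:
the substitutional subshift `X_τ` has exactly two elements, namely the
digit-sum function `σ` and its complement `1 + σ` (under the binary
identification of `H` with `ℕ`, these are exactly the Thue–Morse sequence and
its complement), and the `H`-action on `X_τ` factors through the homomorphism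
`σ : H → ℤ/2`, `σ(h) = Σₙ h(n)`.
-/

/-- The element `(f, h₀, h₁, …)` of `H = ℕ →₀ ZMod 2`. -/
noncomputable def cons (f : ZMod 2) (h : ℕ →₀ ZMod 2) : ℕ →₀ ZMod 2 :=
  Finsupp.single 0 f + Finsupp.embDomain ⟨Nat.succ, Nat.succ_injective⟩ h

/-- `τ̃` induced by a substitution `τ : A → 𝒫(A^{ℤ/2})`. -/
noncomputable def tildeTau {A : Type*} (τ : A → Set (ZMod 2 → A))
    (x : (ℕ →₀ ZMod 2) → A) : Set ((ℕ →₀ ZMod 2) → A) :=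
  {y | ∀ h : ℕ →₀ ZMod 2, (fun f : ZMod 2 => y (cons f h)) ∈ τ (x h)}

/-- `X₀ = A^H`, `X_{n+1} = ⋃_{f} f_{@0} · τ̃(Xₙ)`. -/
noncomputable def subLevel {A : Type*} (τ : A → Set (ZMod 2 → A)) :
    ℕ → Set ((ℕ →₀ ZMod 2) → A)
  | 0 => Set.univ
  | n + 1 =>
      {z | ∃ f : ZMod 2, ∃ x ∈ subLevel τ n, ∃ y ∈ tildeTau τ x,
        z = fun h => y (h + Finsupp.single 0 f)}

/-- The substitutional subshift `X_τ = ⋂ₙ Xₙ`. -/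
noncomputable def subShift {A : Type*} (τ : A → Set (ZMod 2 → A)) :
    Set ((ℕ →₀ ZMod 2) → A) :=
  ⋂ n, subLevel τ n

/-- The Thue–Morse substitution `τ(a) = (a, 1 + a)`, i.e. the tuple
`f ↦ a + f` indexed by `f ∈ ℤ/2`. -/
def tmTau : ZMod 2 → Set (ZMod 2 → ZMod 2) := fun a => {fun f => a + f}

/-- `σ(h) = Σₙ h(n)`: under the binary identification of `H` with `ℕ`, this is
the Thue–Morse sequence. -/
noncomputable def digitSum (h : ℕ →₀ ZMod 2) : ZMod 2 := h.sum fun _ v => v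

/-!
An element `y` of `τ̃(x)` is determined by `x` through `y h = x (tail h) + h 0`, so each
level of the construction pins down one more binary digit: by induction, every `z ∈ Xₙ`
satisfies `z h = z 0 + σ h` whenever `h` is supported in `{0, …, n-1}`. Hence every element
of `X_τ` is `c + σ` for a constant `c`, and conversely each `c + σ` is a fixed point of the
construction, lying in every `Xₙ`. On such functions a translate by `g` only adds `σ g`.
-/

noncomputable def tail (h : ℕ →₀ ZMod 2) : ℕ →₀ ZMod 2 :=
  Finsupp.comapDomain Nat.succ h Nat.succ_injective.injOn

@[simp]
lemma tail_apply (h : ℕ →₀ ZMod 2) (n : ℕ) : tail h n = h (n + 1) := rfl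

@[simp]
lemma cons_apply_zero (f : ZMod 2) (h : ℕ →₀ ZMod 2) : cons f h 0 = f := by
  have : 0 ∉ Set.range (⟨Nat.succ, Nat.succ_injective⟩ : ℕ ↪ ℕ) := by
    rintro ⟨a, ha⟩
    exact Nat.succ_ne_zero a ha
  simp [cons, Finsupp.embDomain_of_notMem_range _ _ _ this]

@[simp]
lemma cons_apply_succ (f : ZMod 2) (h : ℕ →₀ ZMod 2) (n : ℕ) : cons f h (n + 1) = h n := by
  have : Finsupp.embDomain ⟨Nat.succ, Nat.succ_injective⟩ h (n + 1) = h n :=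
    Finsupp.embDomain_apply_self _ h n
  simp [cons, this]

lemma tail_cons (f : ZMod 2) (h : ℕ →₀ ZMod 2) : tail (cons f h) = h := by
  ext n
  simp

lemma cons_zero_tail (h : ℕ →₀ ZMod 2) : cons (h 0) (tail h) = h := by
  ext (_ | n) <;> simp

lemma tail_add_single_zero (h : ℕ →₀ ZMod 2) (f : ZMod 2) :
    tail (h + Finsupp.single 0 f) = tail h := by
  ext n
  simp

lemma tail_single_zero (f : ZMod 2) : tail (Finsupp.single 0 f) = 0 := by
  ext n
  simp

lemma support_tail_subset {h : ℕ →₀ ZMod 2} {n : ℕ} (hs : h.support ⊆ Finset.range (n + 1)) :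
    (tail h).support ⊆ Finset.range n := by
  intro m hm
  have hm' : h (m + 1) ≠ 0 := by simpa using hm
  simpa using hs (Finsupp.mem_support_iff.mpr hm')

lemma digitSum_add (a b : ℕ →₀ ZMod 2) : digitSum (a + b) = digitSum a + digitSum b := by
  simp [digitSum, Finsupp.sum_add_index']

@[simp]
lemma digitSum_zero : digitSum 0 = 0 := by
  simp [digitSum]

@[simp]
lemma digitSum_single (n : ℕ) (f : ZMod 2) : digitSum (Finsupp.single n f) = f := by
  simp [digitSum]

lemma digitSum_cons (f : ZMod 2) (h : ℕ →₀ ZMod 2) : digitSum (cons f h) = f + digitSum h := by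
  rw [cons, digitSum_add, digitSum_single]
  simp [digitSum, Finsupp.sum_embDomain]

lemma digitSum_eq_apply_zero_add_tail (h : ℕ →₀ ZMod 2) :
    digitSum h = h 0 + digitSum (tail h) := by
  conv_lhs => rw [← cons_zero_tail h]
  exact digitSum_cons _ _

lemma mem_tildeTau_tmTau {x y : (ℕ →₀ ZMod 2) → ZMod 2} :
    y ∈ tildeTau tmTau x ↔ ∀ g, y g = x (tail g) + g 0 := by
  simp only [tildeTau, tmTau, Set.mem_singleton_iff, funext_iff]
  constructor
  · intro hy g
    simpa [cons_zero_tail, add_comm] using hy (tail g) (g 0)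
  · intro hy h f
    rw [hy, tail_cons, cons_apply_zero]

lemma affine_mem_tildeTau_tmTau_self (c : ZMod 2) :
    (fun h => c + digitSum h) ∈ tildeTau tmTau (fun h => c + digitSum h) := by
  rw [mem_tildeTau_tmTau]
  intro g
  rw [digitSum_eq_apply_zero_add_tail g]
  ring

lemma affine_mem_subLevel_tmTau (n : ℕ) (c : ZMod 2) :
    (fun h => c + digitSum h) ∈ subLevel tmTau n := by
  induction n generalizing c with
  | zero => trivial
  | succ n ih =>
    refine ⟨c, _, ih 0, _, affine_mem_tildeTau_tmTau_self 0, ?_⟩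
    funext h
    rw [digitSum_add, digitSum_single]
    ring

lemma apply_eq_apply_zero_add_digitSum_of_mem_subLevel {n : ℕ} {z : (ℕ →₀ ZMod 2) → ZMod 2}
    (hz : z ∈ subLevel tmTau n) {h : ℕ →₀ ZMod 2} (hs : h.support ⊆ Finset.range n) :
    z h = z 0 + digitSum h := by
  induction n generalizing z h with
  | zero =>
    obtain rfl : h = 0 := Finsupp.support_eq_empty.mp (Finset.subset_empty.mp hs)
    simp
  | succ n ih =>
    obtain ⟨f, x, hx, y, hy, rfl⟩ := hz
    rw [mem_tildeTau_tmTau] at hy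
    simp only [hy, zero_add, tail_add_single_zero, tail_single_zero,
      ih hx (support_tail_subset hs), Finsupp.add_apply, Finsupp.single_eq_same]
    rw [digitSum_eq_apply_zero_add_tail h]
    ring

lemma eq_affine_of_mem_subShift_tmTau {z : (ℕ →₀ ZMod 2) → ZMod 2}
    (hz : z ∈ subShift tmTau) : z = fun h => z 0 + digitSum h := by
  funext h
  obtain ⟨n, hn⟩ := Finset.exists_nat_subset_range h.support
  exact apply_eq_apply_zero_add_digitSum_of_mem_subLevel (Set.mem_iInter.mp hz n) hn

lemma affine_mem_subShift_tmTau (c : ZMod 2) :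
    (fun h => c + digitSum h) ∈ subShift tmTau :=
  Set.mem_iInter.mpr fun n => affine_mem_subLevel_tmTau n c

/-- `X_τ` consists of exactly the two (distinct) elements `σ` and `1 + σ`,
and the `H`-action on `X_τ` factors through `σ : H → ℤ/2`. -/
theorem thueMorse_subshift :
    subShift tmTau = {digitSum, fun h => 1 + digitSum h} ∧
    digitSum ≠ (fun h => 1 + digitSum h) ∧
    (∀ g₁ g₂ : ℕ →₀ ZMod 2, digitSum g₁ = digitSum g₂ →
      ∀ x ∈ subShift tmTau,
        (fun h => x (h + g₁)) = (fun h => x (h + g₂))) := by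
  refine ⟨?_, ?_, ?_⟩
  · ext z
    constructor
    · intro hz
      rw [eq_affine_of_mem_subShift_tmTau hz]
      rcases (by decide : ∀ a : ZMod 2, a = 0 ∨ a = 1) (z 0) with h0 | h0
      · left
        simp [h0]
      · right
        simp [h0]
    · rintro (rfl | rfl)
      · simpa using affine_mem_subShift_tmTau 0
      · exact affine_mem_subShift_tmTau 1
  · intro heq
    simpa using congrFun heq 0
  · intro g₁ g₂ hg x hx
    rw [eq_affine_of_mem_subShift_tmTau hx]
    funext h
    simp only [digitSum_add, hg]
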